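/- arXiv:2303.14021 — 2 statements merged into one kernel-verified Lean document; each statement's English description precedes it below -/
import Mathlib

section
/- Assume the standing assumptions on f and g. Let α > 0 with 2/α > ρ + L_g, let ε ≥ 0, let x_t ∈ X with f(x_t) finite, and let x_{t+1} be an ε-minimizer of z ↦ f(z) + (1/(2α))‖z − (x_t − α∇g(x_t))‖². Then (f+g)(x_t) − (f+g)(x_{t+1}) ≥ (1/α − ρ/2 − L_g/2)·‖x_t − x_{t+1}‖² − ε − √(2ε/α)·‖x_t − x_{t+1}‖. In particular, if ε = 0 and x_{t+1} ≠ x_t, the objective value strictly decreases. -/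
/-!
Testing the `ε`-minimality of `x₁` at the points `l • x₀ + (1 - l) • x₁` and using the
`ρ`-weak convexity of `f` shows that, for every `l ∈ (0, 1]`, the proximal objective drops from
`x₀` to `x₁` by `(1 - l) (1/(2α) - ρ/2) ‖x₀ - x₁‖²` up to an error `ε / l`; the best `l` costs at
most `ε + √(2ε/α) ‖x₀ - x₁‖`. For the forward point `x₀ - α ∇g(x₀)` the change of the quadratic
term is `‖x₀ - x₁‖² / (2α)` plus the linearisation of `g` at `x₀`, which the descent lemma for the
`L_g`-Lipschitz gradient turns into the change of `g` up to `L_g/2 ‖x₀ - x₁‖²`.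
-/

open scoped RealInnerProductSpace

theorem le_add_add_two_sqrt_mul_of_forall_le_add_div {u K ε : ℝ} (hε : 0 ≤ ε)
    (h : ∀ l : ℝ, 0 < l → l ≤ 1 → (1 - l) * u ≤ K + ε / l) :
    u ≤ K + ε + 2 * √(ε * u) := by
  have hK : 0 ≤ K + ε := by simpa using h 1 one_pos le_rfl
  have hsqrt := Real.sqrt_nonneg (ε * u)
  rcases le_or_gt u ε with hu | hu
  · have : u ≤ √(ε * u) := by
      rcases le_or_gt u 0 with hu0 | hu0
      · exact hu0.trans hsqrt
      · exact Real.le_sqrt_of_sq_le (by nlinarith)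
    linarith
  rcases hε.eq_or_lt with rfl | hε0
  · suffices u ≤ K by simpa
    refine le_of_forall_pos_le_add fun η hη => ?_
    set l := min 1 (η / u)
    have hl : 0 < l := lt_min one_pos (div_pos hη hu)
    have hlu : l * u ≤ η := (le_div_iff₀ hu).mp (min_le_right _ _)
    have := h l hl (min_le_left _ _)
    rw [zero_div] at this
    linarith
  · -- the optimal weight `l = √(ε / u)` balances `l * u` against `ε / l`
    set a := √ε
    set b := √u
    have ha : 0 < a := Real.sqrt_pos.mpr hε0
    have hb : 0 < b := Real.sqrt_pos.mpr (hε.trans_lt hu)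
    have hab : a < b := Real.sqrt_lt_sqrt hε hu
    have ha2 : a ^ 2 = ε := Real.sq_sqrt hε
    have hb2 : b ^ 2 = u := Real.sq_sqrt (hε.trans hu.le)
    have := h (a / b) (div_pos ha hb) ((div_le_one hb).mpr hab.le)
    rw [← ha2, ← hb2] at this
    have e1 : (1 - a / b) * b ^ 2 = b ^ 2 - a * b := by field_simp
    have e2 : a ^ 2 / (a / b) = a * b := by field_simp
    rw [e1, e2] at this
    rw [Real.sqrt_mul hε]
    linarith

section InnerProductSpace

variable {X : Type*} [NormedAddCommGroup X] [InnerProductSpace ℝ X]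

theorem norm_smul_add_one_sub_smul_sub_sq (x y z : X) (l : ℝ) :
    ‖l • x + (1 - l) • y - z‖ ^ 2 =
      l * ‖x - z‖ ^ 2 + (1 - l) * ‖y - z‖ ^ 2 - l * (1 - l) * ‖x - y‖ ^ 2 := by
  have h₁ : l • x + (1 - l) • y - z = l • (x - z) + (1 - l) • (y - z) := by module
  have h₂ : x - y = (x - z) - (y - z) := by abel
  rw [h₁, h₂, norm_add_sq_real, norm_sub_sq_real (x - z), norm_smul, norm_smul,
    real_inner_smul_left, real_inner_smul_right, Real.norm_eq_abs, Real.norm_eq_abs, mul_pow,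
    mul_pow, sq_abs, sq_abs]
  ring

theorem descent_lemma [CompleteSpace X] {g : X → ℝ} {g' : X → X} {L : ℝ}
    (hg : ∀ x, HasGradientAt g (g' x) x) (hg' : ∀ x y, ‖g' x - g' y‖ ≤ L * ‖x - y‖)
    (x v : X) : g (x + v) ≤ g x + ⟪g' x, v⟫ + L / 2 * ‖v‖ ^ 2 := by
  set φ : ℝ → ℝ := fun t => g (x + t • v) - t * ⟪g' x, v⟫ - L / 2 * t ^ 2 * ‖v‖ ^ 2
  have hφ : ∀ t, HasDerivAt φ (⟪g' (x + t • v), v⟫ - ⟪g' x, v⟫ - L * t * ‖v‖ ^ 2) t := by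
    intro t
    have hline : HasDerivAt (fun t : ℝ => x + t • v) v t := by
      simpa using ((hasDerivAt_id t).smul_const v).const_add x
    have hgt : HasDerivAt (fun t : ℝ => g (x + t • v)) ⟪g' (x + t • v), v⟫ t := by
      have h := (hg (x + t • v)).hasFDerivAt.comp_hasDerivAt t hline
      simp only [InnerProductSpace.toDual_apply_apply] at h
      exact h
    have hsq := ((hasDerivAt_pow 2 t).const_mul (L / 2)).mul_const (‖v‖ ^ 2)
    exact ((hgt.sub ((hasDerivAt_id' t).mul_const ⟪g' x, v⟫)).sub hsq).congr_deriv
      (by push_cast; ring)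
  have hanti : AntitoneOn φ (Set.Icc 0 1) := by
    refine antitoneOn_of_deriv_nonpos (convex_Icc 0 1)
      (HasDerivAt.continuousOn fun t _ => hφ t)
      (fun t _ => (hφ t).differentiableAt.differentiableWithinAt) fun t ht => ?_
    rw [interior_Icc] at ht
    have hlip : ‖g' (x + t • v) - g' x‖ ≤ L * (t * ‖v‖) := by
      simpa [norm_smul, abs_of_pos ht.1] using hg' (x + t • v) x
    have hcs := real_inner_le_norm (g' (x + t • v) - g' x) v
    rw [inner_sub_left] at hcs
    rw [(hφ t).deriv]
    nlinarith [mul_le_mul_of_nonneg_right hlip (norm_nonneg v)]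
  have := hanti (Set.left_mem_Icc.mpr zero_le_one) (Set.right_mem_Icc.mpr zero_le_one) zero_le_one
  simp only [φ, one_smul, zero_smul, add_zero, one_pow, one_mul, zero_mul, ne_eq,
    OfNat.ofNat_ne_zero, not_false_eq_true, zero_pow, mul_zero, sub_zero] at this
  linarith

theorem inexact_prox_sufficient_decrease {f : X → EReal} {ρ α ε F₀ F₁ : ℝ} {x₀ x₁ y : X}
    (hρ : 0 ≤ ρ) (hα : 0 < α) (hε : 0 ≤ ε)
    (hf_wc : ∀ l : ℝ, 0 ≤ l → l ≤ 1 →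
      f (l • x₀ + (1 - l) • x₁) ≤ ((l : ℝ) : EReal) * f x₀ + ((1 - l : ℝ) : EReal) * f x₁ +
        ((l * (1 - l) * (ρ / 2) * ‖x₀ - x₁‖ ^ 2 : ℝ) : EReal))
    (hx₁ : ∀ z : X,
      f x₁ + ((1 / (2 * α) * ‖x₁ - y‖ ^ 2 : ℝ) : EReal) ≤
      f z + ((1 / (2 * α) * ‖z - y‖ ^ 2 + ε : ℝ) : EReal))
    (hF₀ : f x₀ = F₀) (hF₁ : f x₁ = F₁) :
    F₁ + 1 / (2 * α) * ‖x₁ - y‖ ^ 2 + (1 / (2 * α) - ρ / 2) * ‖x₀ - x₁‖ ^ 2 ≤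
      F₀ + 1 / (2 * α) * ‖x₀ - y‖ ^ 2 + ε + √(2 * ε / α) * ‖x₀ - x₁‖ := by
  set c := 1 / (2 * α) - ρ / 2
  set d := ‖x₀ - x₁‖
  have hseg : ∀ l : ℝ, 0 < l → l ≤ 1 → (1 - l) * (c * d ^ 2) ≤
      (F₀ + 1 / (2 * α) * ‖x₀ - y‖ ^ 2 - F₁ - 1 / (2 * α) * ‖x₁ - y‖ ^ 2) + ε / l := by
    intro l hl0 hl1
    have hz := (hx₁ _).trans (add_le_add_left (hf_wc l hl0.le hl1) _)
    rw [hF₀, hF₁] at hz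
    have hreal : F₁ + 1 / (2 * α) * ‖x₁ - y‖ ^ 2 ≤
        l * F₀ + (1 - l) * F₁ + l * (1 - l) * (ρ / 2) * d ^ 2 +
          (1 / (2 * α) * ‖l • x₀ + (1 - l) • x₁ - y‖ ^ 2 + ε) := by
      exact_mod_cast hz
    rw [norm_smul_add_one_sub_smul_sub_sq] at hreal
    rw [← sub_le_iff_le_add', le_div_iff₀ hl0]
    linear_combination hreal
  have hsqrt : 2 * √(ε * (c * d ^ 2)) ≤ √(2 * ε / α) * d := by
    have hc : 4 * (ε * (c * d ^ 2)) = 2 * ε / α * d ^ 2 - 2 * ε * ρ * d ^ 2 := by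
      simp only [c]
      field_simp
      ring
    calc 2 * √(ε * (c * d ^ 2)) = √(4 * (ε * (c * d ^ 2))) := by
          rw [Real.sqrt_mul (by norm_num : (0 : ℝ) ≤ 4), show (4 : ℝ) = 2 ^ 2 by norm_num,
            Real.sqrt_sq zero_le_two]
      _ ≤ √(2 * ε / α * d ^ 2) :=
          Real.sqrt_le_sqrt (by rw [hc]; exact sub_le_self _ (by positivity))
      _ = √(2 * ε / α) * d := by
          rw [Real.sqrt_mul' _ (sq_nonneg d), Real.sqrt_sq (norm_nonneg _)]
  linarith [le_add_add_two_sqrt_mul_of_forall_le_add_div hε hseg]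

end InnerProductSpace

theorem stmt_8_general {X : Type*} [NormedAddCommGroup X] [InnerProductSpace ℝ X] [CompleteSpace X]
    (f : X → EReal) (g : X → ℝ) (g' : X → X) (ρ Lg : ℝ) (hρ : 0 ≤ ρ)
    (hf_proper : (∃ x, f x ≠ ⊤) ∧ ∀ x, f x ≠ ⊥)
    (hf_wc : ∀ x y : X, ∀ l : ℝ, 0 ≤ l → l ≤ 1 →
      f (l • x + (1 - l) • y) ≤ ((l : ℝ) : EReal) * f x + ((1 - l : ℝ) : EReal) * f y +
        ((l * (1 - l) * (ρ / 2) * ‖x - y‖ ^ 2 : ℝ) : EReal))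
    (hg_diff : ∀ x, HasGradientAt g (g' x) x)
    (hg_lip : ∀ x y, ‖g' x - g' y‖ ≤ Lg * ‖x - y‖)
    (α ε : ℝ) (hα : 0 < α) (hstep : ρ + Lg < 2 / α) (hε : 0 ≤ ε)
    (x₀ x₁ : X) (hfin : f x₀ ≠ ⊤)
    (hx₁ : ∀ z : X,
      f x₁ + ((1 / (2 * α) * ‖x₁ - (x₀ - α • g' x₀)‖ ^ 2 : ℝ) : EReal) ≤
      f z + ((1 / (2 * α) * ‖z - (x₀ - α • g' x₀)‖ ^ 2 + ε : ℝ) : EReal)) :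
    (f x₁ + ((g x₁ + (1 / α - ρ / 2 - Lg / 2) * ‖x₀ - x₁‖ ^ 2 - ε
        - Real.sqrt (2 * ε / α) * ‖x₀ - x₁‖ : ℝ) : EReal)
      ≤ f x₀ + ((g x₀ : ℝ) : EReal)) ∧
    (ε = 0 → x₁ ≠ x₀ →
      f x₁ + ((g x₁ : ℝ) : EReal) < f x₀ + ((g x₀ : ℝ) : EReal)) := by
  obtain ⟨F₀, hF₀⟩ : ∃ F₀ : ℝ, f x₀ = F₀ :=
    ⟨_, (EReal.coe_toReal hfin (hf_proper.2 x₀)).symm⟩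
  have hfin₁ : f x₁ ≠ ⊤ := by
    intro htop
    have := hx₁ x₀
    rw [htop, hF₀, EReal.top_add_coe, ← EReal.coe_add, top_le_iff] at this
    exact EReal.coe_ne_top _ this
  obtain ⟨F₁, hF₁⟩ : ∃ F₁ : ℝ, f x₁ = F₁ :=
    ⟨_, (EReal.coe_toReal hfin₁ (hf_proper.2 x₁)).symm⟩
  have hprox := inexact_prox_sufficient_decrease hρ hα hε (hf_wc x₀ x₁) hx₁ hF₀ hF₁
  have hdesc := descent_lemma hg_diff hg_lip x₀ (x₁ - x₀)
  rw [add_sub_cancel, ← norm_neg, neg_sub] at hdesc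
  have hfwd : 1 / (2 * α) * ‖x₁ - (x₀ - α • g' x₀)‖ ^ 2 =
      1 / (2 * α) * ‖x₀ - (x₀ - α • g' x₀)‖ ^ 2 + 1 / (2 * α) * ‖x₀ - x₁‖ ^ 2
        + ⟪g' x₀, x₁ - x₀⟫ := by
    rw [show x₁ - (x₀ - α • g' x₀) = (x₁ - x₀) + α • g' x₀ by abel, sub_sub_cancel,
      norm_add_sq_real, real_inner_smul_right, real_inner_comm, ← norm_neg (x₁ - x₀), neg_sub]
    field_simp
    ring
  have hmain : F₁ + (g x₁ + (1 / α - ρ / 2 - Lg / 2) * ‖x₀ - x₁‖ ^ 2 - ε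
      - √(2 * ε / α) * ‖x₀ - x₁‖) ≤ F₀ + g x₀ := by
    linear_combination hprox + hdesc - hfwd
  rw [hF₀, hF₁]
  refine ⟨by exact_mod_cast hmain, fun hε0 hne => ?_⟩
  have hd : 0 < ‖x₀ - x₁‖ := norm_pos_iff.mpr (sub_ne_zero.mpr hne.symm)
  have hcoef : 0 < 1 / α - ρ / 2 - Lg / 2 := by
    rw [div_eq_mul_one_div 2 α] at hstep
    linarith
  subst hε0
  rw [mul_zero, zero_div, Real.sqrt_zero, zero_mul, sub_zero, sub_zero] at hmain
  exact_mod_cast (by linarith [mul_pos hcoef (pow_pos hd 2)] : F₁ + g x₁ < F₀ + g x₀)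

/-- descent estimate for one step of the inexact forward–backward algorithm.
Under the standing assumptions, if `2/α > ρ + L_g`, `f(x₀)` is finite and `x₁` is an
`ε`-minimizer of `z ↦ f z + (1/(2α))‖z − (x₀ − α∇g(x₀))‖²`, then
`(f+g)(x₀) − (f+g)(x₁) ≥ (1/α − ρ/2 − L_g/2)‖x₀−x₁‖² − ε − √(2ε/α)‖x₀−x₁‖`;
in particular, if `ε = 0` and `x₁ ≠ x₀`, the objective value strictly decreases. -/
theorem stmt_8 {X : Type*} [NormedAddCommGroup X] [InnerProductSpace ℝ X] [CompleteSpace X]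
    (f : X → EReal) (g : X → ℝ) (g' : X → X) (ρ Lg : ℝ) (hρ : 0 ≤ ρ)
    (hf_proper : (∃ x, f x ≠ ⊤) ∧ ∀ x, f x ≠ ⊥)
    (hf_lsc : LowerSemicontinuous f)
    (hf_wc : ∀ x y : X, ∀ l : ℝ, 0 ≤ l → l ≤ 1 →
      f (l • x + (1 - l) • y) ≤ ((l : ℝ) : EReal) * f x + ((1 - l : ℝ) : EReal) * f y +
        ((l * (1 - l) * (ρ / 2) * ‖x - y‖ ^ 2 : ℝ) : EReal))
    (hf_bdd : ∃ m : ℝ, ∀ x, ((m : ℝ) : EReal) ≤ f x)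
    (hg_conv : ConvexOn ℝ Set.univ g)
    (hg_diff : ∀ x, HasGradientAt g (g' x) x)
    (hg_lip : ∀ x y, ‖g' x - g' y‖ ≤ Lg * ‖x - y‖)
    (hS : {x : X | ∀ y : X, f x + ((g x : ℝ) : EReal) ≤ f y + ((g y : ℝ) : EReal)}.Nonempty)
    (α ε : ℝ) (hα : 0 < α) (hstep : ρ + Lg < 2 / α) (hε : 0 ≤ ε)
    (x₀ x₁ : X) (hfin : f x₀ ≠ ⊤)
    (hx₁ : ∀ z : X,
      f x₁ + ((1 / (2 * α) * ‖x₁ - (x₀ - α • g' x₀)‖ ^ 2 : ℝ) : EReal) ≤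
      f z + ((1 / (2 * α) * ‖z - (x₀ - α • g' x₀)‖ ^ 2 + ε : ℝ) : EReal)) :
    (f x₁ + ((g x₁ + (1 / α - ρ / 2 - Lg / 2) * ‖x₀ - x₁‖ ^ 2 - ε
        - Real.sqrt (2 * ε / α) * ‖x₀ - x₁‖ : ℝ) : EReal)
      ≤ f x₀ + ((g x₀ : ℝ) : EReal)) ∧
    (ε = 0 → x₁ ≠ x₀ →
      f x₁ + ((g x₁ : ℝ) : EReal) < f x₀ + ((g x₀ : ℝ) : EReal)) :=
  stmt_8_general f g g' ρ Lg hρ hf_proper hf_wc hg_diff hg_lip α ε hα hstep hε x₀ x₁ hfin hx₁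
end

section
/- Assume the standing assumptions on f and g, that f+g satisfies the global sharpness condition with constant μ > 0, and that ε and α satisfy the parameter assumption, with E⁻ and E⁺ defined accordingly. Let (x_t) be an inexact forward–backward sequence with constant step size α and accuracy ε. If there exists t₀ ∈ ℕ such that E⁻ < dist(x_t,S) < E⁺ for all t ≥ t₀, then lim_{t→∞} dist(x_t,S) = E⁻. -/
/-!
Write `d t = dist (x t, S)`. Testing the `ε`-minimality of `x (t + 1)` against
`l s + (1 - l) x (t + 1)` with `s ∈ S` and `l = α / (α + 1)`, and using weak convexity of `f`, the
descent lemma and convexity of `g`, and sharpness, gives `d (t + 1)² - d t² ≤ q (d (t + 1))` with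
`q d = α (ρ + 1) d² - 2 α μ d + 2 (α + 1) ε`. The roots of `q` are `E⁻` and `E⁺`, so inside the band
the distances decrease strictly; their limit `L ∈ [E⁻, E⁺)` satisfies `q L ≥ 0`, which forces
`L = E⁻`.
-/

open Metric Filter Set Topology
open scoped RealInnerProductSpace

theorem EReal.ne_top_of_add_coe_le {a c : EReal} {r r' : ℝ} (h : a + r ≤ c + r') (hc : c ≠ ⊤) :
    a ≠ ⊤ := by
  rintro rfl
  rw [EReal.top_add_coe, top_le_iff] at h
  exact EReal.add_ne_top hc (EReal.coe_ne_top r') h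

theorem Metric.le_infDist_sq {X : Type*} [PseudoMetricSpace X] {S : Set X} {a : X} {c : ℝ}
    (hS : S.Nonempty) (h : ∀ s ∈ S, c ≤ dist a s ^ 2) : c ≤ infDist a S ^ 2 := by
  have hsqrt : √c ≤ infDist a S :=
    (le_infDist hS).2 fun s hs => Real.sqrt_le_iff.2 ⟨dist_nonneg, h s hs⟩
  exact (Real.sqrt_le_iff.1 hsqrt).2

theorem quadratic_neg_of_mem_Ioo {a b c d : ℝ} (ha : 0 < a)
    (h₁ : (b - √(b ^ 2 - a * c)) / a < d) (h₂ : d < (b + √(b ^ 2 - a * c)) / a) :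
    a * d ^ 2 - 2 * b * d + c < 0 := by
  rw [div_lt_iff₀ ha] at h₁
  rw [lt_div_iff₀ ha] at h₂
  have hpos : 0 < √(b ^ 2 - a * c) := by linarith
  have hsq := Real.sq_sqrt (Real.sqrt_pos.1 hpos).le
  nlinarith [mul_pos (sub_pos.2 h₂) (sub_pos.2 h₁)]

theorem tendsto_of_sq_sub_sq_le {u : ℕ → ℝ} {q : ℝ → ℝ} {m M : ℝ} {t₀ : ℕ}
    (hq : Continuous q) (hneg : ∀ d ∈ Ioo m M, q d < 0) (hu : ∀ t, 0 ≤ u t)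
    (hstep : ∀ t ≥ t₀, u (t + 1) ^ 2 - u t ^ 2 ≤ q (u (t + 1)))
    (hband : ∀ t ≥ t₀, u t ∈ Ioo m M) :
    Tendsto u atTop (𝓝 m) := by
  rw [← tendsto_add_atTop_iff_nat t₀]
  set v : ℕ → ℝ := fun n => u (n + t₀)
  have hv_band (n : ℕ) : v n ∈ Ioo m M := hband _ (Nat.le_add_left _ _)
  have hv_step (n : ℕ) : v (n + 1) ^ 2 - v n ^ 2 ≤ q (v (n + 1)) := by
    simpa [v, Nat.add_right_comm] using hstep (n + t₀) (Nat.le_add_left _ _)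
  have hv_anti : Antitone v := antitone_nat_of_succ_le fun n => by
    have := (hv_step n).trans_lt (hneg _ (hv_band (n + 1)))
    nlinarith [hu (n + 1 + t₀), hu (n + t₀)]
  have hv_lim : Tendsto v atTop (𝓝 (⨅ n, v n)) :=
    tendsto_atTop_ciInf hv_anti ⟨m, by rintro _ ⟨n, rfl⟩; exact (hv_band n).1.le⟩
  set L := ⨅ n, v n
  have hv_lim' : Tendsto (fun n => v (n + 1)) atTop (𝓝 L) := hv_lim.comp (tendsto_add_atTop_nat 1)
  have hqL : 0 ≤ q L := by
    have := le_of_tendsto_of_tendsto ((hv_lim'.pow 2).sub (hv_lim.pow 2))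
      ((hq.tendsto L).comp hv_lim') (Eventually.of_forall hv_step)
    simpa using this
  have hmL : m ≤ L := ge_of_tendsto hv_lim (Eventually.of_forall fun n => (hv_band n).1.le)
  have hLM : L < M := (hv_anti.le_of_tendsto hv_lim 0).trans_lt (hv_band 0).2
  obtain rfl : L = m := by
    by_contra hne
    exact (hneg L ⟨lt_of_le_of_ne hmL (Ne.symm hne), hLM⟩).not_ge hqL
  exact hv_lim

section

variable {X : Type*} [NormedAddCommGroup X] [InnerProductSpace ℝ X]

def IsWeaklyConvex (ρ : ℝ) (f : X → EReal) : Prop :=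
  ∀ x y : X, ∀ l : ℝ, 0 ≤ l → l ≤ 1 →
    f (l • x + (1 - l) • y) ≤ ((l : ℝ) : EReal) * f x + ((1 - l : ℝ) : EReal) * f y +
      ((l * (1 - l) * (ρ / 2) * ‖x - y‖ ^ 2 : ℝ) : EReal)

def IsApproxProx (f : X → EReal) (α ε : ℝ) (y b : X) : Prop :=
  ∀ z : X, f b + ((1 / (2 * α) * ‖b - y‖ ^ 2 : ℝ) : EReal) ≤
    f z + ((1 / (2 * α) * ‖z - y‖ ^ 2 + ε : ℝ) : EReal)

theorem norm_smul_add_one_sub_smul_sq (l : ℝ) (u v : X) :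
    ‖l • u + (1 - l) • v‖ ^ 2 = l * ‖u‖ ^ 2 + (1 - l) * ‖v‖ ^ 2 - l * (1 - l) * ‖u - v‖ ^ 2 := by
  rw [norm_add_sq_real, norm_sub_sq_real, norm_smul, norm_smul, real_inner_smul_left,
    real_inner_smul_right, Real.norm_eq_abs, Real.norm_eq_abs, mul_pow, mul_pow, sq_abs, sq_abs]
  ring

theorem norm_sub_sub_smul_sq (u a w : X) (α : ℝ) :
    ‖u - (a - α • w)‖ ^ 2 = ‖u - a‖ ^ 2 + 2 * α * ⟪w, u - a⟫ + α ^ 2 * ‖w‖ ^ 2 := by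
  rw [show u - (a - α • w) = (u - a) + α • w by abel, norm_add_sq_real, inner_smul_right,
    norm_smul, real_inner_comm, Real.norm_eq_abs, mul_pow, sq_abs]
  ring

theorem IsApproxProx.three_point {f : X → EReal} {ρ α ε Fb Fs : ℝ} {y b s : X}
    (hf : IsWeaklyConvex ρ f) (hα : 0 < α) (hb : IsApproxProx f α ε y b)
    (hfb : f b = Fb) (hfs : f s = Fs) :
    ‖b - y‖ ^ 2 + (1 - α * ρ) / (α + 1) * ‖s - b‖ ^ 2 + 2 * α * (Fb - Fs) ≤
      ‖s - y‖ ^ 2 + 2 * (α + 1) * ε := by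
  set l := α / (α + 1) with hl
  have hl0 : 0 ≤ l := by positivity
  have hl1 : l ≤ 1 := div_le_one_of_le₀ (by linarith) (by linarith)
  have hwc := hf s b l hl0 hl1
  rw [hfb, hfs] at hwc
  have hcmp := (hb (l • s + (1 - l) • b)).trans (add_le_add_left hwc _)
  rw [hfb] at hcmp
  have hreal : Fb + 1 / (2 * α) * ‖b - y‖ ^ 2 ≤
      l * Fs + (1 - l) * Fb + l * (1 - l) * (ρ / 2) * ‖s - b‖ ^ 2 +
        (1 / (2 * α) * ‖l • s + (1 - l) • b - y‖ ^ 2 + ε) := by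
    exact_mod_cast hcmp
  have hsplit : l • s + (1 - l) • b - y = l • (s - y) + (1 - l) • (b - y) := by
    rw [smul_sub, smul_sub]; module
  rw [hsplit, norm_smul_add_one_sub_smul_sq, sub_sub_sub_cancel_right] at hreal
  have hα1 : 0 < α + 1 := by linarith
  rw [hl] at hreal
  field_simp at hreal ⊢
  nlinarith

variable [CompleteSpace X]

theorem HasGradientAt.hasDerivAt_add_smul {g : X → ℝ} {a v d : X} {θ : ℝ}
    (hg : HasGradientAt g d (a + θ • v)) :
    HasDerivAt (fun τ : ℝ => g (a + τ • v)) ⟪d, v⟫ θ := by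
  have hline : HasDerivAt (fun τ : ℝ => a + τ • v) v θ := by
    simpa using ((hasDerivAt_id θ).smul_const v).const_add a
  simpa [InnerProductSpace.toDual_apply_apply, Function.comp_def] using
    hg.hasFDerivAt.comp_hasDerivAt θ hline

theorem le_add_inner_add_of_lipschitz_gradient {g : X → ℝ} {g' : X → X} {L : ℝ}
    (hg : ∀ x, HasGradientAt g (g' x) x) (hlip : ∀ x y, ‖g' x - g' y‖ ≤ L * ‖x - y‖)
    (a b : X) :
    g b ≤ g a + ⟪g' a, b - a⟫ + L / 2 * ‖b - a‖ ^ 2 := by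
  set v := b - a
  set h : ℝ → ℝ := fun τ => g (a + τ • v) - τ * ⟪g' a, v⟫ - L / 2 * τ ^ 2 * ‖v‖ ^ 2
  have hderiv : ∀ τ, HasDerivAt h (⟪g' (a + τ • v), v⟫ - ⟪g' a, v⟫ - L * τ * ‖v‖ ^ 2) τ := by
    intro τ
    refine ((((hg (a + τ • v)).hasDerivAt_add_smul).sub ((hasDerivAt_id τ).mul_const ⟪g' a, v⟫)).sub
      ((((hasDerivAt_id τ).pow 2).const_mul (L / 2)).mul_const (‖v‖ ^ 2))).congr_deriv ?_
    simp only [id, Nat.cast_ofNat]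
    ring
  have hanti : AntitoneOn h (Icc 0 1) := by
    refine antitoneOn_of_hasDerivWithinAt_nonpos (convex_Icc 0 1)
      (fun τ _ => (hderiv τ).continuousAt.continuousWithinAt)
      (fun τ _ => (hderiv τ).hasDerivWithinAt) fun τ hτ => ?_
    rw [interior_Icc] at hτ
    have hnorm : ‖g' (a + τ • v) - g' a‖ ≤ L * τ * ‖v‖ := by
      simpa [norm_smul, abs_of_pos hτ.1, mul_assoc] using hlip (a + τ • v) a
    have := real_inner_le_norm (g' (a + τ • v) - g' a) v
    rw [inner_sub_left] at this
    nlinarith [mul_le_mul_of_nonneg_right hnorm (norm_nonneg v)]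
  have := hanti (left_mem_Icc.2 zero_le_one) (right_mem_Icc.2 zero_le_one) zero_le_one
  simp only [h, v, one_smul, zero_smul, add_zero, add_sub_cancel] at this
  linarith

theorem ConvexOn.inner_gradient_le_sub {g : X → ℝ} {g' : X → X} (hconv : ConvexOn ℝ univ g)
    (hg : ∀ x, HasGradientAt g (g' x) x) (a s : X) :
    ⟪g' a, s - a⟫ ≤ g s - g a := by
  have hline : ConvexOn ℝ univ fun τ : ℝ => g (a + τ • (s - a)) := by
    have := hconv.comp_affineMap (AffineMap.lineMap a s : ℝ →ᵃ[ℝ] X)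
    simpa [Function.comp_def, AffineMap.lineMap_apply_module', add_comm] using this
  have hderiv := (hg (a + (0 : ℝ) • (s - a))).hasDerivAt_add_smul (v := s - a)
  simp only [zero_smul, add_zero] at hderiv
  simpa [slope_def_field] using
    hline.le_slope_of_hasDerivAt (mem_univ 0) (mem_univ 1) zero_lt_one hderiv

theorem IsApproxProx.forwardBackward_sq_le {f : X → EReal} {g : X → ℝ} {g' : X → X}
    {ρ L α ε μ Fb Fs d : ℝ} {a b s : X}
    (hf : IsWeaklyConvex ρ f) (hg_conv : ConvexOn ℝ univ g)
    (hg : ∀ x, HasGradientAt g (g' x) x) (hlip : ∀ x y, ‖g' x - g' y‖ ≤ L * ‖x - y‖)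
    (hρ : 0 ≤ ρ) (hα : 0 < α) (hαL : α * L ≤ 1) (hαρ : α * ρ ≤ 1)
    (hb : IsApproxProx f α ε (a - α • g' a) b) (hfb : f b = Fb) (hfs : f s = Fs)
    (hsharp : Fs + g s + μ * d ≤ Fb + g b) (hd0 : 0 ≤ d) (hd : d ≤ ‖s - b‖) :
    (1 - α * (ρ + 1)) * d ^ 2 + 2 * α * μ * d - 2 * (α + 1) * ε ≤ ‖s - a‖ ^ 2 := by
  have h3 := hb.three_point hf hα hfb hfs
  rw [norm_sub_sub_smul_sq, norm_sub_sub_smul_sq] at h3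
  have hdescent := le_add_inner_add_of_lipschitz_gradient hg hlip a b
  have hconv := hg_conv.inner_gradient_le_sub hg a s
  have hcoef : 1 - α * (ρ + 1) ≤ (1 - α * ρ) / (α + 1) := by
    rw [le_div_iff₀ (by linarith)]; nlinarith [mul_nonneg (sq_nonneg α) hρ]
  have hdist : (1 - α * ρ) / (α + 1) * d ^ 2 ≤ (1 - α * ρ) / (α + 1) * ‖s - b‖ ^ 2 := by
    gcongr
  nlinarith [mul_le_mul_of_nonneg_right hcoef (sq_nonneg d), sq_nonneg ‖b - a‖]

theorem IsApproxProx.forwardBackward_infDist_sq_le {f : X → EReal} {g : X → ℝ} {g' : X → X}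
    {ρ L α ε μ : ℝ} {S : Set X} {a b : X}
    (hf : IsWeaklyConvex ρ f) (hf_fin : ∃ z, f z ≠ ⊤) (hf_bot : ∀ x, f x ≠ ⊥)
    (hg_conv : ConvexOn ℝ univ g) (hg : ∀ x, HasGradientAt g (g' x) x)
    (hlip : ∀ x y, ‖g' x - g' y‖ ≤ L * ‖x - y‖)
    (hS : ∀ s ∈ S, ∀ y, f s + ((g s : ℝ) : EReal) ≤ f y + ((g y : ℝ) : EReal))
    (hSne : S.Nonempty)
    (hsharp : ∀ x, sInf (range fun y => f y + ((g y : ℝ) : EReal)) +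
      ((μ * infDist x S : ℝ) : EReal) ≤ f x + ((g x : ℝ) : EReal))
    (hρ : 0 ≤ ρ) (hα : 0 < α) (hαL : α * L ≤ 1) (hαρ : α * ρ ≤ 1)
    (hb : IsApproxProx f α ε (a - α • g' a) b) :
    (1 - α * (ρ + 1)) * infDist b S ^ 2 + 2 * α * μ * infDist b S - 2 * (α + 1) * ε ≤
      infDist a S ^ 2 := by
  obtain ⟨z, hz⟩ := hf_fin
  have hfb : f b = ((f b).toReal : EReal) :=
    (EReal.coe_toReal (EReal.ne_top_of_add_coe_le (hb z) hz) (hf_bot b)).symm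
  refine le_infDist_sq hSne fun s hs => ?_
  have hfs : f s = ((f s).toReal : EReal) :=
    (EReal.coe_toReal (EReal.ne_top_of_add_coe_le (hS s hs z) hz) (hf_bot s)).symm
  have hmin : sInf (range fun y => f y + ((g y : ℝ) : EReal)) = f s + ((g s : ℝ) : EReal) :=
    le_antisymm (sInf_le ⟨s, rfl⟩) (le_sInf <| by rintro _ ⟨y, rfl⟩; exact hS s hs y)
  have hsharp_b : (f s).toReal + g s + μ * infDist b S ≤ (f b).toReal + g b := by
    have := hsharp b
    rw [hmin, hfs, hfb] at this
    exact_mod_cast this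
  rw [dist_comm, dist_eq_norm]
  refine hb.forwardBackward_sq_le hf hg_conv hg hlip hρ hα hαL hαρ hfb hfs hsharp_b
    infDist_nonneg ?_
  rw [← dist_eq_norm, dist_comm]
  exact infDist_le_dist_of_mem hs

end

theorem stmt_12_general {X : Type*} [NormedAddCommGroup X] [InnerProductSpace ℝ X] [CompleteSpace X]
    (f : X → EReal) (g : X → ℝ) (g' : X → X) (ρ Lg : ℝ) (hρ : 0 ≤ ρ)
    (hf_proper : (∃ x, f x ≠ ⊤) ∧ ∀ x, f x ≠ ⊥)
    (hf_wc : ∀ x y : X, ∀ l : ℝ, 0 ≤ l → l ≤ 1 →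
      f (l • x + (1 - l) • y) ≤ ((l : ℝ) : EReal) * f x + ((1 - l : ℝ) : EReal) * f y +
        ((l * (1 - l) * (ρ / 2) * ‖x - y‖ ^ 2 : ℝ) : EReal))
    (hg_conv : ConvexOn ℝ Set.univ g)
    (hg_diff : ∀ x, HasGradientAt g (g' x) x)
    (hg_lip : ∀ x y, ‖g' x - g' y‖ ≤ Lg * ‖x - y‖)
    (S : Set X)
    (hS : S = {x : X | ∀ y : X, f x + ((g x : ℝ) : EReal) ≤ f y + ((g y : ℝ) : EReal)})
    (hSne : S.Nonempty)
    (μ : ℝ)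
    (hsharp : ∀ x : X,
      sInf (Set.range fun y : X => f y + ((g y : ℝ) : EReal)) +
          ((μ * Metric.infDist x S : ℝ) : EReal) ≤ f x + ((g x : ℝ) : EReal))
    (α ε : ℝ) (hα : 0 < α)
    (hαub : α < min (1 / Lg) (1 / (ρ + 1)))
    (Em Ep : ℝ)
    (hEm : Em = (μ - Real.sqrt (μ ^ 2 - 2 * ε * (ρ + 1) * (α + 1) / α)) / (ρ + 1))
    (hEp : Ep = (μ + Real.sqrt (μ ^ 2 - 2 * ε * (ρ + 1) * (α + 1) / α)) / (ρ + 1))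
    (x : ℕ → X)
    (hseq : ∀ t : ℕ, ∀ z : X,
      f (x (t + 1)) +
          ((1 / (2 * α) * ‖x (t + 1) - (x t - α • g' (x t))‖ ^ 2 : ℝ) : EReal) ≤
        f z + ((1 / (2 * α) * ‖z - (x t - α • g' (x t))‖ ^ 2 + ε : ℝ) : EReal))
    (t₀ : ℕ)
    (hband : ∀ t ≥ t₀, Em < Metric.infDist (x t) S ∧ Metric.infDist (x t) S < Ep) :
    Filter.Tendsto (fun t : ℕ => Metric.infDist (x t) S) Filter.atTop (nhds Em) := by
  have hαρ : α * (ρ + 1) < 1 := by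
    have h := hαub.trans_le (min_le_right _ _)
    rwa [lt_div_iff₀ (by linarith)] at h
  have hαL : α * Lg ≤ 1 := by
    have h := hαub.trans_le (min_le_left _ _)
    have hL : 0 < Lg := by
      by_contra! hL
      linarith [one_div_nonpos.2 hL]
    exact ((lt_div_iff₀ hL).1 h).le
  refine tendsto_of_sq_sub_sq_le
    (q := fun d => α * (ρ + 1) * d ^ 2 - 2 * α * μ * d + 2 * (α + 1) * ε)
    (by fun_prop) ?_ (fun _ => infDist_nonneg) (fun t _ => ?_) hband
  · rintro d ⟨hd₁, hd₂⟩
    have hdisc : μ ^ 2 - 2 * ε * (ρ + 1) * (α + 1) / α =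
        μ ^ 2 - (ρ + 1) * (2 * ε * (α + 1) / α) := by ring
    rw [hEm, hdisc] at hd₁
    rw [hEp, hdisc] at hd₂
    have := mul_neg_of_pos_of_neg hα (quadratic_neg_of_mem_Ioo (by linarith) hd₁ hd₂)
    field_simp at this
    linarith
  · have := IsApproxProx.forwardBackward_infDist_sq_le hf_wc hf_proper.1 hf_proper.2 hg_conv hg_diff
      hg_lip (fun s hs => by rwa [hS] at hs) hSne hsharp hρ hα hαL (by linarith [mul_add α ρ 1])
      (hseq t)
    linarith

/-- Theorem 6.1, second part: under the standing assumptions, global sharpness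
of `f+g` with constant `μ > 0`, and the parameter assumptions on `ε` and `α`, for an inexact
forward–backward sequence: if `E⁻ < dist(x_t,S) < E⁺` for all `t ≥ t₀`, then
`dist(x_t,S) → E⁻` as `t → ∞`. -/
theorem stmt_12 {X : Type*} [NormedAddCommGroup X] [InnerProductSpace ℝ X] [CompleteSpace X]
    (f : X → EReal) (g : X → ℝ) (g' : X → X) (ρ Lg : ℝ) (hρ : 0 ≤ ρ)
    (hf_proper : (∃ x, f x ≠ ⊤) ∧ ∀ x, f x ≠ ⊥)
    (hf_lsc : LowerSemicontinuous f)
    (hf_wc : ∀ x y : X, ∀ l : ℝ, 0 ≤ l → l ≤ 1 →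
      f (l • x + (1 - l) • y) ≤ ((l : ℝ) : EReal) * f x + ((1 - l : ℝ) : EReal) * f y +
        ((l * (1 - l) * (ρ / 2) * ‖x - y‖ ^ 2 : ℝ) : EReal))
    (hf_bdd : ∃ m : ℝ, ∀ x, ((m : ℝ) : EReal) ≤ f x)
    (hg_conv : ConvexOn ℝ Set.univ g)
    (hg_diff : ∀ x, HasGradientAt g (g' x) x)
    (hg_lip : ∀ x y, ‖g' x - g' y‖ ≤ Lg * ‖x - y‖)
    (S : Set X)
    (hS : S = {x : X | ∀ y : X, f x + ((g x : ℝ) : EReal) ≤ f y + ((g y : ℝ) : EReal)})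
    (hSne : S.Nonempty)
    (μ : ℝ) (hμ : 0 < μ)
    (hsharp : ∀ x : X,
      sInf (Set.range fun y : X => f y + ((g y : ℝ) : EReal)) +
          ((μ * Metric.infDist x S : ℝ) : EReal) ≤ f x + ((g x : ℝ) : EReal))
    (α ε : ℝ) (hα : 0 < α) (hε0 : 0 ≤ ε)
    (hεlt : ε < μ ^ 2 / (2 * (ρ + 1)) * min (1 / (Lg + 1)) (1 / (ρ + 2)))
    (hαlb : 2 * ε * (ρ + 1) / (μ ^ 2 - 2 * ε * (ρ + 1)) ≤ α)
    (hαub : α < min (1 / Lg) (1 / (ρ + 1)))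
    (Em Ep : ℝ)
    (hEm : Em = (μ - Real.sqrt (μ ^ 2 - 2 * ε * (ρ + 1) * (α + 1) / α)) / (ρ + 1))
    (hEp : Ep = (μ + Real.sqrt (μ ^ 2 - 2 * ε * (ρ + 1) * (α + 1) / α)) / (ρ + 1))
    (x : ℕ → X)
    (hseq : ∀ t : ℕ, ∀ z : X,
      f (x (t + 1)) +
          ((1 / (2 * α) * ‖x (t + 1) - (x t - α • g' (x t))‖ ^ 2 : ℝ) : EReal) ≤
        f z + ((1 / (2 * α) * ‖z - (x t - α • g' (x t))‖ ^ 2 + ε : ℝ) : EReal))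
    (t₀ : ℕ)
    (hband : ∀ t ≥ t₀, Em < Metric.infDist (x t) S ∧ Metric.infDist (x t) S < Ep) :
    Filter.Tendsto (fun t : ℕ => Metric.infDist (x t) S) Filter.atTop (nhds Em) :=
  stmt_12_general f g g' ρ Lg hρ hf_proper hf_wc hg_conv hg_diff hg_lip S hS hSne μ hsharp α ε hα
    hαub Em Ep hEm hEp x hseq t₀ hband
end
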